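/- arXiv:2401.16763 — 2 statements merged into one kernel-verified Lean document; each statement's English description precedes it below -/
import Mathlib

section
/- The total energy function E(ρ, m, S) = |m|²/(2ρ) + c_V ρ^γ exp(S/(c_V ρ)), defined for ρ > 0, m ∈ ℝ^d, S ∈ ℝ, is a convex function of (ρ, m, S) on the open set {ρ > 0} × ℝ^d × ℝ. -/
/-!
Both summands are convex, and each is checked by exhibiting at every point a tangent
hyperplane lying below the graph. For the kinetic part `‖m‖² / ρ` the gap between the function and
its tangent at `(ρ, m)`, evaluated at `(ρ', m')`, is `‖ρ m' - ρ' m‖² / (ρ' ρ²)`. For the internal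
part, after factoring out its value at `(ρ, S)` and writing `r = ρ' / ρ`, the tangent inequality
becomes `1 + γ (r - 1) + r t ≤ r ^ γ e ^ t`, which follows from `e ^ x ≥ 1 + x` and
`r log r ≥ r - 1`; this holds for every `c` and every `γ ≥ 1`.
-/

open Real

theorem ConvexOn.of_forall_add_linearMap_le {𝕜 E : Type*} [Field 𝕜] [LinearOrder 𝕜]
    [IsStrictOrderedRing 𝕜] [AddCommGroup E] [Module 𝕜 E] {s : Set E} {f : E → 𝕜}
    (hs : Convex 𝕜 s) (h : ∀ z ∈ s, ∃ φ : E →ₗ[𝕜] 𝕜, ∀ y ∈ s, f z + φ (y - z) ≤ f y) :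
    ConvexOn 𝕜 s f := by
  refine ⟨hs, fun x hx y hy a b ha hb hab => ?_⟩
  set z := a • x + b • y
  obtain ⟨φ, hφ⟩ := h z (hs hx hy ha hb hab)
  have hφ_balance : a * φ (x - z) + b * φ (y - z) = 0 := by
    have : a • (x - z) + b • (y - z) = 0 := by
      rw [smul_sub, smul_sub, sub_add_sub_comm, ← add_smul, hab, one_smul, sub_self]
    rw [← smul_eq_mul, ← smul_eq_mul, ← map_smul, ← map_smul, ← map_add, this, map_zero]
  calc f z = a * (f z + φ (x - z)) + b * (f z + φ (y - z)) := by
        linear_combination (-(f z)) * hab - hφ_balance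
    _ ≤ a * f x + b * f y := by gcongr <;> [exact hφ x hx; exact hφ y hy]

theorem convex_setOf_pos_fst {E : Type*} [AddCommGroup E] [Module ℝ E] :
    Convex ℝ {p : ℝ × E | 0 < p.1} :=
  convex_halfSpace_gt (LinearMap.fst ℝ ℝ E).isLinear 0

section Kinetic

variable {E : Type*} [NormedAddCommGroup E] [InnerProductSpace ℝ E]

theorem norm_sq_div_add_le {ρ ρ' : ℝ} (hρ : 0 < ρ) (hρ' : 0 < ρ') (m m' : E) :
    ‖m‖ ^ 2 / ρ + (-(‖m‖ ^ 2 / ρ ^ 2) * (ρ' - ρ) + 2 / ρ * inner ℝ m (m' - m))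
      ≤ ‖m'‖ ^ 2 / ρ' := by
  have hsq : ‖ρ • m' - ρ' • m‖ ^ 2
      = ρ ^ 2 * ‖m'‖ ^ 2 - 2 * (ρ * ρ') * inner ℝ m m' + ρ' ^ 2 * ‖m‖ ^ 2 := by
    rw [norm_sub_sq_real, norm_smul, norm_smul, real_inner_smul_left, real_inner_smul_right,
      real_inner_comm, Real.norm_of_nonneg hρ.le, Real.norm_of_nonneg hρ'.le]
    ring
  have hgap : ‖m'‖ ^ 2 / ρ'
      - (‖m‖ ^ 2 / ρ + (-(‖m‖ ^ 2 / ρ ^ 2) * (ρ' - ρ) + 2 / ρ * inner ℝ m (m' - m)))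
      = ‖ρ • m' - ρ' • m‖ ^ 2 / (ρ' * ρ ^ 2) := by
    rw [hsq, inner_sub_right, real_inner_self_eq_norm_sq]
    field_simp
    ring
  have : 0 ≤ ‖ρ • m' - ρ' • m‖ ^ 2 / (ρ' * ρ ^ 2) := by positivity
  linarith

theorem convexOn_norm_sq_div : ConvexOn ℝ {p : ℝ × E | 0 < p.1} fun p => ‖p.2‖ ^ 2 / p.1 := by
  refine .of_forall_add_linearMap_le convex_setOf_pos_fst fun ⟨ρ, m⟩ hρ => ?_
  refine ⟨-(‖m‖ ^ 2 / ρ ^ 2) • LinearMap.fst ℝ ℝ E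
    + (2 / ρ) • (innerₛₗ ℝ m).comp (LinearMap.snd ℝ ℝ E), fun ⟨ρ', m'⟩ hρ' => ?_⟩
  simpa using norm_sq_div_add_le hρ hρ' m m'

end Kinetic

theorem one_add_mul_sub_one_add_mul_le_rpow_mul_exp {γ r : ℝ} (hγ : 1 ≤ γ) (hr : 0 < r)
    (t : ℝ) : 1 + γ * (r - 1) + r * t ≤ r ^ γ * exp t := by
  have hlog : 1 - r⁻¹ ≤ log r := one_sub_inv_le_log_of_pos hr
  have hexp : r ^ γ * exp t = r * exp ((γ - 1) * log r + t) := by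
    rw [exp_add, mul_comm (γ - 1), ← rpow_def_of_pos hr, rpow_sub_one hr.ne']
    field_simp
  calc 1 + γ * (r - 1) + r * t = r * (1 + t + (γ - 1) * (1 - r⁻¹)) := by field_simp; ring
    _ ≤ r * ((γ - 1) * log r + t + 1) := by
        gcongr r * ?_
        linarith [mul_le_mul_of_nonneg_left hlog (sub_nonneg.2 hγ)]
    _ ≤ r ^ γ * exp t := by rw [hexp]; gcongr; exact add_one_le_exp _

theorem rpow_mul_exp_div_add_le {γ : ℝ} (hγ : 1 ≤ γ) (c : ℝ) {ρ ρ' : ℝ} (hρ : 0 < ρ)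
    (hρ' : 0 < ρ') (S S' : ℝ) :
    ρ ^ γ * exp (S / (c * ρ)) + (ρ ^ γ * exp (S / (c * ρ)) * (γ / ρ - S / (c * ρ ^ 2)) * (ρ' - ρ)
      + ρ ^ γ * exp (S / (c * ρ)) / (c * ρ) * (S' - S)) ≤ ρ' ^ γ * exp (S' / (c * ρ')) := by
  set K := ρ ^ γ * exp (S / (c * ρ)) with hK
  have key := mul_le_mul_of_nonneg_left (one_add_mul_sub_one_add_mul_le_rpow_mul_exp hγ
    (div_pos hρ' hρ) (S' / (c * ρ') - S / (c * ρ))) (by positivity : 0 ≤ K)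
  have hR : K * ((ρ' / ρ) ^ γ * exp (S' / (c * ρ') - S / (c * ρ)))
      = ρ' ^ γ * exp (S' / (c * ρ')) := by
    rw [hK, div_rpow hρ'.le hρ.le, exp_sub]
    field_simp
  have hL : K * (1 + γ * (ρ' / ρ - 1) + ρ' / ρ * (S' / (c * ρ') - S / (c * ρ)))
      = K + (K * (γ / ρ - S / (c * ρ ^ 2)) * (ρ' - ρ) + K / (c * ρ) * (S' - S)) := by
    rcases eq_or_ne c 0 with rfl | hc
    -- for `c = 0` every `S`-term is `0` by the convention `x / 0 = 0`
    · simp only [zero_mul, div_zero, sub_zero, mul_zero]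
      field_simp
      ring
    · field_simp
      ring
  rwa [hL, hR] at key

theorem convexOn_rpow_mul_exp_div {γ : ℝ} (hγ : 1 ≤ γ) (c : ℝ) :
    ConvexOn ℝ {p : ℝ × ℝ | 0 < p.1} fun p => p.1 ^ γ * exp (p.2 / (c * p.1)) := by
  refine .of_forall_add_linearMap_le convex_setOf_pos_fst fun ⟨ρ, S⟩ hρ => ?_
  refine ⟨(ρ ^ γ * exp (S / (c * ρ)) * (γ / ρ - S / (c * ρ ^ 2))) • LinearMap.fst ℝ ℝ ℝ
    + (ρ ^ γ * exp (S / (c * ρ)) / (c * ρ)) • LinearMap.snd ℝ ℝ ℝ, fun ⟨ρ', S'⟩ hρ' => ?_⟩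
  simpa using rpow_mul_exp_div_add_le hγ c hρ hρ' S S'

theorem total_energy_convex_general
    (d : ℕ)
    (γ : ℝ) (hγ : 1 < γ) (cV : ℝ) (hcV : cV = 1 / (γ - 1)) :
    ConvexOn ℝ {x : ℝ × EuclideanSpace ℝ (Fin d) × ℝ | 0 < x.1}
      (fun x => ‖x.2.1‖ ^ 2 / (2 * x.1) + cV * x.1 ^ γ * Real.exp (x.2.2 / (cV * x.1))) := by
  have hcV_nonneg : 0 ≤ cV := hcV ▸ one_div_nonneg.2 (sub_nonneg.2 hγ.le)
  have kinetic := (convexOn_norm_sq_div.comp_linearMap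
    (LinearMap.prodMap LinearMap.id (LinearMap.fst ℝ (EuclideanSpace ℝ (Fin d)) ℝ))).smul
    (one_half_pos (α := ℝ)).le
  have internal := ((convexOn_rpow_mul_exp_div hγ.le cV).comp_linearMap
    (LinearMap.prodMap LinearMap.id (LinearMap.snd ℝ (EuclideanSpace ℝ (Fin d)) ℝ))).smul
    hcV_nonneg
  refine (kinetic.add internal).congr fun x _ => ?_
  simp only [Pi.add_apply, Function.comp_apply, LinearMap.prodMap_apply, LinearMap.id_coe, id_eq,
    LinearMap.fst_apply, LinearMap.snd_apply, smul_eq_mul]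
  ring

theorem total_energy_convex
    (d : ℕ) (hd : 1 ≤ d)
    (γ : ℝ) (hγ : 1 < γ) (cV : ℝ) (hcV : cV = 1 / (γ - 1)) :
    ConvexOn ℝ {x : ℝ × EuclideanSpace ℝ (Fin d) × ℝ | 0 < x.1}
      (fun x => ‖x.2.1‖ ^ 2 / (2 * x.1) + cV * x.1 ^ γ * Real.exp (x.2.2 / (cV * x.1))) :=
  total_energy_convex_general d γ hγ cV hcV
end

section
/- Strict convexity of the internal energy: the function H(ρ,S) = c_V ρ^γ exp(S/(c_V ρ)) is strictly convex on (0,∞) × ℝ, i.e. its Hessian is positive definite at every point (ρ,S) with ρ > 0. -/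
/-!
Writing `k = γ c_V`, the internal energy factors as `H = c_V g ^ γ` with
`g(ρ, S) = ρ exp (S / (k ρ))`, the perspective of the strictly convex function `t ↦ exp (t / k)`.
The perspective is convex, and strictly so along segments on which `S / ρ` varies; on a segment
where `S / ρ` is constant it is affine but injective. Since `t ↦ c_V t ^ γ` is strictly convex and
strictly increasing on `[0, ∞)`, composing it with `g` is strictly convex in both cases.
-/

open Real Set

theorem StrictConvexOn.comp_convexOn_of_lt_or_ne {E : Type*} [AddCommGroup E] [Module ℝ E]
    {s : Set E} {t : Set ℝ} {f : E → ℝ} {φ : ℝ → ℝ}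
    (hφ : StrictConvexOn ℝ t φ) (hφ_mono : StrictMonoOn φ t) (hf : ConvexOn ℝ s f)
    (hst : MapsTo f s t)
    (hf_strict : ∀ ⦃x⦄, x ∈ s → ∀ ⦃y⦄, y ∈ s → x ≠ y → ∀ ⦃a b : ℝ⦄, 0 < a → 0 < b → a + b = 1 →
      f (a • x + b • y) < a • f x + b • f y ∨ f x ≠ f y) :
    StrictConvexOn ℝ s (φ ∘ f) := by
  refine ⟨hf.1, fun x hx y hy hxy a b ha hb hab => ?_⟩
  have hmid : a • x + b • y ∈ s := hf.1 hx hy ha.le hb.le hab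
  have hcomb : a • f x + b • f y ∈ t := hφ.1 (hst hx) (hst hy) ha.le hb.le hab
  rcases hf_strict hx hy hxy ha hb hab with hlt | hne
  · calc φ (f (a • x + b • y)) < φ (a • f x + b • f y) := hφ_mono (hst hmid) hcomb hlt
      _ ≤ a • φ (f x) + b • φ (f y) := hφ.convexOn.2 (hst hx) (hst hy) ha.le hb.le hab
  · calc φ (f (a • x + b • y)) ≤ φ (a • f x + b • f y) :=
          hφ_mono.monotoneOn (hst hmid) hcomb (hf.2 hx hy ha.le hb.le hab)
      _ < a • φ (f x) + b • φ (f y) := hφ.2 (hst hx) (hst hy) hne ha hb hab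

theorem strictConvexOn_const_mul_rpow {c p : ℝ} (hc : 0 < c) (hp : 1 < p) :
    StrictConvexOn ℝ (Ici 0) fun x : ℝ => c * x ^ p := by
  refine ⟨convex_Ici 0, fun x hx y hy hxy a b ha hb hab => ?_⟩
  have h := (strictConvexOn_rpow hp).2 hx hy hxy ha hb hab
  simp only [smul_eq_mul] at h ⊢
  nlinarith

theorem strictConvexOn_exp_div {k : ℝ} (hk : 0 < k) :
    StrictConvexOn ℝ univ fun x : ℝ => exp (x / k) := by
  refine ⟨convex_univ, fun x _ y _ hxy a b ha hb hab => ?_⟩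
  have hne : x / k ≠ y / k := fun h => hxy ((div_left_inj' hk.ne').1 h)
  have h := strictConvexOn_exp.2 (mem_univ _) (mem_univ _) hne ha hb hab
  simp only [smul_eq_mul] at h ⊢
  rwa [add_div, mul_div_assoc, mul_div_assoc]

noncomputable def perspective (f : ℝ → ℝ) (p : ℝ × ℝ) : ℝ := p.1 * f (p.2 / p.1)

section Perspective

variable {f : ℝ → ℝ} {p q : ℝ × ℝ} {a b : ℝ}

theorem perspective_smul_add_smul (hp : 0 < p.1) (hq : 0 < q.1) (hR : 0 < a * p.1 + b * q.1) :
    perspective f (a • p + b • q) = (a * p.1 + b * q.1) *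
      f (a * p.1 / (a * p.1 + b * q.1) * (p.2 / p.1) +
        b * q.1 / (a * p.1 + b * q.1) * (q.2 / q.1)) := by
  simp only [perspective, Prod.fst_add, Prod.snd_add, Prod.smul_fst, Prod.smul_snd, smul_eq_mul]
  congr 2
  field_simp

theorem smul_perspective_add_smul_perspective (hR : 0 < a * p.1 + b * q.1) :
    a * perspective f p + b * perspective f q = (a * p.1 + b * q.1) *
      (a * p.1 / (a * p.1 + b * q.1) * f (p.2 / p.1) +
        b * q.1 / (a * p.1 + b * q.1) * f (q.2 / q.1)) := by
  simp only [perspective]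
  field_simp

theorem perspective_weights_add (hR : 0 < a * p.1 + b * q.1) :
    a * p.1 / (a * p.1 + b * q.1) + b * q.1 / (a * p.1 + b * q.1) = 1 := by
  field_simp

theorem ConvexOn.perspective (hf : ConvexOn ℝ univ f) :
    ConvexOn ℝ {p : ℝ × ℝ | 0 < p.1} (perspective f) := by
  refine ⟨(convex_Ioi 0).linear_preimage (LinearMap.fst ℝ ℝ ℝ),
    fun p (hp : 0 < p.1) q (hq : 0 < q.1) a b ha hb hab => ?_⟩
  have hR : 0 < a * p.1 + b * q.1 := by
    rcases ha.eq_or_lt with rfl | ha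
    · simp_all
    · positivity
  rw [smul_eq_mul, smul_eq_mul, perspective_smul_add_smul hp hq hR,
    smul_perspective_add_smul_perspective hR]
  exact mul_le_mul_of_nonneg_left (hf.2 (mem_univ _) (mem_univ _) (by positivity)
    (by positivity) (perspective_weights_add hR)) hR.le

theorem StrictConvexOn.perspective_lt (hf : StrictConvexOn ℝ univ f) (hp : 0 < p.1)
    (hq : 0 < q.1) (hpq : p.2 / p.1 ≠ q.2 / q.1) (ha : 0 < a) (hb : 0 < b) :
    perspective f (a • p + b • q) < a * perspective f p + b * perspective f q := by
  have hR : 0 < a * p.1 + b * q.1 := by positivity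
  rw [perspective_smul_add_smul hp hq hR, smul_perspective_add_smul_perspective hR]
  exact mul_lt_mul_of_pos_left (hf.2 (mem_univ _) (mem_univ _) hpq (by positivity)
    (by positivity) (perspective_weights_add hR)) hR

theorem StrictConvexOn.perspective_lt_or_ne (hf : StrictConvexOn ℝ univ f) (hf0 : ∀ x, f x ≠ 0)
    (hp : 0 < p.1) (hq : 0 < q.1) (hpq : p ≠ q) (ha : 0 < a) (hb : 0 < b) :
    perspective f (a • p + b • q) < a * perspective f p + b * perspective f q ∨
      perspective f p ≠ perspective f q := by
  by_cases hu : p.2 / p.1 = q.2 / q.1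
  · refine Or.inr fun heq => hpq ?_
    have h1 : p.1 = q.1 := mul_right_cancel₀ (hf0 _) (by rwa [perspective, perspective, hu] at heq)
    have h2 : p.2 = q.2 := by rwa [h1, div_left_inj' hq.ne'] at hu
    exact Prod.ext h1 h2
  · exact Or.inl (hf.perspective_lt hp hq hu ha hb)

end Perspective

theorem internal_energy_strictConvex
    (γ : ℝ) (hγ : 1 < γ) (cV : ℝ) (hcV : cV = 1 / (γ - 1)) :
    StrictConvexOn ℝ {p : ℝ × ℝ | 0 < p.1}
      (fun p => cV * p.1 ^ γ * Real.exp (p.2 / (cV * p.1))) := by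
  have hcV0 : 0 < cV := by rw [hcV]; exact one_div_pos.2 (by linarith)
  have hk : 0 < γ * cV := by positivity
  have hfactor : EqOn ((fun x => cV * x ^ γ) ∘ perspective fun x => exp (x / (γ * cV)))
      (fun p => cV * p.1 ^ γ * exp (p.2 / (cV * p.1))) {p | 0 < p.1} := by
    intro p (hp : 0 < p.1)
    simp only [Function.comp_apply, perspective]
    rw [mul_rpow hp.le (exp_pos _).le, ← exp_mul, mul_assoc]
    congr 3
    field_simp
  refine StrictConvexOn.congr ?_ hfactor
  refine (strictConvexOn_const_mul_rpow hcV0 hγ).comp_convexOn_of_lt_or_ne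
    (fun x hx y _ hxy => mul_lt_mul_of_pos_left (rpow_lt_rpow hx hxy (by linarith)) hcV0)
    (strictConvexOn_exp_div hk).convexOn.perspective
    (fun p (hp : 0 < p.1) => mem_Ici.2 (by unfold perspective; positivity)) ?_
  intro p hp q hq hpq a b ha hb _
  exact (strictConvexOn_exp_div hk).perspective_lt_or_ne (fun x => (exp_pos _).ne') hp hq hpq ha hb
end
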